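/- Let $\Omega \subset \mathbb{R}^2$ be a bounded domain containing the origin, with area $|\Omega| \geq \pi r^2$ for some $r > 0$, and suppose $\Omega \neq D_r(0)$ (so $G_i = \Omega \setminus \overline{D_r(0)}$ is a nonempty open set). Let $V(y) = I_0(\mu|y|)$ with $\mu > 0$. If $|\Omega|\, a(\mu r) = \int_\Omega V(y)\log\frac{r}{|y|}\, dy$ and $\pi r^2 a(\mu r) = \int_{D_r(0)} V(y)\log\frac{r}{|y|}\, dy$, where $a(t) = 2(I_0(t)-1)/t^2$, then a contradiction follows: the difference $(|\Omega| - \pi r^2)\, a(\mu r) = \int_{G_i} V \log\frac{r}{|y|}\, dy - \int_{G_e} V \log\frac{r}{|y|}\, dy$ is nonnegative on the left but strictly negative on the right (where $G_e = D_r(0) \setminus \overline{\Omega}$), since $V > 0$ everywhere, $\log(r/|y|) < 0$ on $G_i$, and $\log(r/|y|) > 0$ on $G_e$. -/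
import Mathlib


open MeasureTheory Real intervalIntegral

/-- Modified Bessel function of the first kind, order 0. -/
noncomputable def besselI0 (t : ℝ) : ℝ :=
  (1 / π) * ∫ θ in (0:ℝ)..π, Real.cosh (t * Real.cos θ)

/-- Modified Bessel function of the first kind, order 1. -/
noncomputable def besselI1 (t : ℝ) : ℝ :=
  (1 / π) * ∫ θ in (0:ℝ)..π, Real.cosh (t * Real.cos θ) * Real.cos θ

/-- Bessel function of the first kind, order 0. -/
noncomputable def besselJ0 (t : ℝ) : ℝ :=
  (1 / π) * ∫ θ in (0:ℝ)..π, Real.cos (t * Real.sin θ)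

lemma cosh_cos_intable (t a b : ℝ) : IntervalIntegrable (fun θ => Real.cosh (t * Real.cos θ)) volume a b :=
  (Real.continuous_cosh.comp (continuous_const.mul Real.continuous_cos)).intervalIntegrable a b

lemma besselI0_ge_one (t : ℝ) : 1 ≤ besselI0 t := by
  have h : (∫ θ in (0:ℝ)..π, (1:ℝ)) ≤ ∫ θ in (0:ℝ)..π, Real.cosh (t * Real.cos θ) := by
    apply intervalIntegral.integral_mono_on Real.pi_pos.le (intervalIntegrable_const) (cosh_cos_intable t 0 π)
    intro x _; exact Real.one_le_cosh _
  rw [intervalIntegral.integral_const, smul_eq_mul, mul_one, sub_zero] at h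
  rw [besselI0]
  calc (1:ℝ) = (1/π) * π := by field_simp
  _ ≤ _ := by
    apply mul_le_mul_of_nonneg_left h (by positivity)

lemma besselI0_gt_one {t : ℝ} (ht : 0 < t) : 1 < besselI0 t := by
  have hsplit : (∫ θ in (0:ℝ)..π, Real.cosh (t * Real.cos θ)) =
      (∫ θ in (0:ℝ)..(π/2), Real.cosh (t * Real.cos θ)) +
      ∫ θ in (π/2:ℝ)..π, Real.cosh (t * Real.cos θ) :=
    (intervalIntegral.integral_add_adjacent_intervals (cosh_cos_intable t 0 (π/2))
      (cosh_cos_intable t (π/2) π)).symm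
  have h1 : (∫ θ in (0:ℝ)..(π/2), (1:ℝ)) < ∫ θ in (0:ℝ)..(π/2), Real.cosh (t * Real.cos θ) := by
    rw [← sub_pos, ← intervalIntegral.integral_sub (cosh_cos_intable t 0 (π/2)) intervalIntegrable_const]
    apply intervalIntegral.intervalIntegral_pos_of_pos_on
      ((cosh_cos_intable t 0 (π/2)).sub intervalIntegrable_const)
    · intro x hx
      have hc : 0 < Real.cos x := Real.cos_pos_of_mem_Ioo ⟨by linarith [hx.1, Real.pi_pos], hx.2⟩
      have : (1:ℝ) < Real.cosh (t * Real.cos x) := by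
        rw [Real.one_lt_cosh]
        positivity
      linarith
    · linarith [Real.pi_pos]
  have h2 : (∫ θ in (π/2:ℝ)..π, (1:ℝ)) ≤ ∫ θ in (π/2:ℝ)..π, Real.cosh (t * Real.cos θ) := by
    apply intervalIntegral.integral_mono_on (by linarith [Real.pi_pos]) intervalIntegrable_const
      (cosh_cos_intable t (π/2) π)
    intro x _; exact Real.one_le_cosh _
  rw [intervalIntegral.integral_const, smul_eq_mul, mul_one, sub_zero] at h1
  rw [intervalIntegral.integral_const, smul_eq_mul, mul_one] at h2
  have h : π < ∫ θ in (0:ℝ)..π, Real.cosh (t * Real.cos θ) := by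
    rw [hsplit]; linarith
  rw [besselI0]
  calc (1:ℝ) = (1/π) * π := by field_simp
  _ < _ := by
    apply mul_lt_mul_of_pos_left h (by positivity)


/-- The Euclidean plane. -/
abbrev E2 := EuclideanSpace ℝ (Fin 2)

/-- The Laplacian of a function on the plane, as a sum of second partial derivatives. -/
noncomputable def lap (f : E2 → ℝ) (y : E2) : ℝ :=
  ∑ i : Fin 2,
    fderiv ℝ (fun z => fderiv ℝ f z (EuclideanSpace.single i 1)) y (EuclideanSpace.single i 1)

/-- The point on the circle of radius `r` about `x` at angle `θ`. -/
noncomputable def circlePt (x : E2) (r θ : ℝ) : E2 :=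
  x + (r * Real.cos θ) • EuclideanSpace.single 0 1 + (r * Real.sin θ) • EuclideanSpace.single 1 1

theorem inverse_weighted_mean_contradiction
    (Ω : Set E2) (hΩo : IsOpen Ω) (hΩc : IsConnected Ω)
    (hΩb : Bornology.IsBounded Ω) (h0 : (0 : E2) ∈ Ω)
    (r : ℝ) (hr : 0 < r) (harea : π * r ^ 2 ≤ (volume Ω).toReal)
    (hne : Ω ≠ Metric.ball (0 : E2) r)
    (hGi : (Ω \ closure (Metric.ball (0 : E2) r)).Nonempty)
    (μ : ℝ) (hμ : 0 < μ)
    (h1 : (volume Ω).toReal * (2 * (besselI0 (μ * r) - 1) / (μ * r) ^ 2) =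
      ∫ y in Ω, besselI0 (μ * ‖y‖) * Real.log (r / ‖y‖))
    (h2 : π * r ^ 2 * (2 * (besselI0 (μ * r) - 1) / (μ * r) ^ 2) =
      ∫ y in Metric.ball (0 : E2) r, besselI0 (μ * ‖y‖) * Real.log (r / ‖y‖)) :
    False := by
  set B : Set E2 := Metric.ball (0 : E2) r with hB
  set f : E2 → ℝ := fun y => besselI0 (μ * ‖y‖) * Real.log (r / ‖y‖) with hf
  set A : ℝ := (volume Ω).toReal with hA
  set a : ℝ := 2 * (besselI0 (μ * r) - 1) / (μ * r) ^ 2 with haa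
  have hμr : 0 < μ * r := mul_pos hμ hr
  have ha : 0 < a := by
    have := besselI0_gt_one hμr
    rw [haa]
    have h2' : 0 < besselI0 (μ * r) - 1 := by linarith
    positivity
  have hApos : 0 < A := lt_of_lt_of_le (by positivity) harea
  have hΩmeas : MeasurableSet Ω := hΩo.measurableSet
  have hBmeas : MeasurableSet B := Metric.isOpen_ball.measurableSet
  by_cases hInt1 : IntegrableOn f Ω volume
  swap
  · rw [MeasureTheory.integral_undef hInt1] at h1
    nlinarith
  by_cases hInt2 : IntegrableOn f B volume
  swap
  · rw [MeasureTheory.integral_undef hInt2] at h2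
    have : 0 < π * r ^ 2 * a := by positivity
    linarith
  -- splits
  have split1 : (∫ y in Ω ∩ B, f y) + ∫ y in Ω \ B, f y = ∫ y in Ω, f y :=
    MeasureTheory.integral_inter_add_diff hBmeas hInt1
  have split2 : (∫ y in Ω ∩ B, f y) + ∫ y in B \ Ω, f y = ∫ y in B, f y := by
    rw [Set.inter_comm]
    exact MeasureTheory.integral_inter_add_diff hΩmeas hInt2
  -- f nonneg on B \ Ω
  have hfnn : ∀ y : E2, ‖y‖ < r → 0 ≤ f y := by
    intro y hy
    have hV : (1:ℝ) ≤ besselI0 (μ * ‖y‖) := besselI0_ge_one _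
    rcases eq_or_lt_of_le (norm_nonneg y) with h | h
    · simp [hf, ← h]
    · have : (1:ℝ) ≤ r / ‖y‖ := (one_le_div h).2 hy.le
      have := Real.log_nonneg this
      rw [hf]; positivity
  have hpos2 : 0 ≤ ∫ y in B \ Ω, f y := by
    apply MeasureTheory.setIntegral_nonneg (hBmeas.diff hΩmeas)
    intro y hy
    exact hfnn y (mem_ball_zero_iff.1 hy.1)
  -- f nonpos outside ball
  have hfnp : ∀ y : E2, r ≤ ‖y‖ → f y ≤ 0 := by
    intro y hy
    have hny : 0 < ‖y‖ := lt_of_lt_of_le hr hy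
    have hlog : Real.log (r / ‖y‖) ≤ 0 :=
      Real.log_nonpos (by positivity) ((div_le_one hny).2 hy)
    have hV : (0:ℝ) ≤ besselI0 (μ * ‖y‖) := le_trans zero_le_one (besselI0_ge_one _)
    exact mul_nonpos_of_nonneg_of_nonpos hV hlog
  set Gi : Set E2 := Ω \ closure B with hGidef
  have hGiOpen : IsOpen Gi := hΩo.sdiff isClosed_closure
  have hGisub : Gi ⊆ Ω \ B := Set.diff_subset_diff_right subset_closure
  have hGivol : 0 < volume Gi := hGiOpen.measure_pos volume hGi
  have hfltGi : ∀ y ∈ Gi, f y < 0 := by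
    intro y hy
    have hy' : r < ‖y‖ := by
      have := hy.2
      rw [closure_ball _ hr.ne'] at this
      simpa [Metric.mem_closedBall, dist_zero_right, not_le] using this
    have hny : 0 < ‖y‖ := lt_trans hr hy'
    have hlog : Real.log (r / ‖y‖) < 0 :=
      Real.log_neg (by positivity) ((div_lt_one hny).2 hy')
    have hV : (0:ℝ) < besselI0 (μ * ‖y‖) := lt_of_lt_of_le zero_lt_one (besselI0_ge_one _)
    exact mul_neg_of_pos_of_neg hV hlog
  have hGineg : (∫ y in Gi, f y) < 0 := by
    have hint : IntegrableOn (fun y => -f y) Gi volume :=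
      ((hInt1.mono_set Set.diff_subset).neg : )
    have hae : 0 ≤ᵐ[volume.restrict Gi] fun y => -f y := by
      refine (MeasureTheory.ae_restrict_iff' hGiOpen.measurableSet).2 ?_
      exact Filter.Eventually.of_forall fun y hy => neg_nonneg.2 (hfltGi y hy).le
    have hpos : 0 < ∫ y in Gi, -f y := by
      rw [MeasureTheory.setIntegral_pos_iff_support_of_nonneg_ae hae hint]
      refine lt_of_lt_of_le hGivol (measure_mono ?_)
      intro y hy
      exact ⟨by simp [Function.mem_support]; exact (hfltGi y hy).ne, hy⟩
    rw [MeasureTheory.integral_neg] at hpos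
    linarith
  have hrest : (∫ y in (Ω \ B) \ Gi, f y) ≤ 0 := by
    apply MeasureTheory.setIntegral_nonpos ((hΩmeas.diff hBmeas).diff hGiOpen.measurableSet)
    intro y hy
    exact hfnp y (le_of_not_gt fun h => hy.1.2 (mem_ball_zero_iff.2 h))
  have split3 : (∫ y in Gi, f y) + ∫ y in (Ω \ B) \ Gi, f y = ∫ y in Ω \ B, f y := by
    have := MeasureTheory.integral_inter_add_diff (μ := volume) (f := f) (s := Ω \ B)
      hGiOpen.measurableSet (hInt1.mono_set Set.diff_subset)
    rwa [Set.inter_eq_self_of_subset_right hGisub] at this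
  have hkey : (A - π * r ^ 2) * a = (∫ y in Ω \ B, f y) - ∫ y in B \ Ω, f y := by
    have := h1; have := h2
    nlinarith [split1, split2]
  nlinarith [mul_nonneg (sub_nonneg.2 harea) ha.le]
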